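/- For all formulas A and B, the following formulas are derivable in GAMALL: ◇(□A ⊸ □□A), ◇(◇A ⊸ □◇A), ◇(A ⊸ □◇A), ◇(◇A ⊸ A), ◇(A ⊸ □A), and ◇(A ⊸ □B) ⊸ ◇(□A ⊸ B); the first three are ◇-forms of the modal axioms S4, S5 and B respectively. -/

import Mathlib

/-- Formulas of MALL: atoms, constants 0, 1, ⊥, ⊤, negation, tensor ⊗,
par ⊕, additive conjunction ∧ and additive disjunction ∨. -/
inductive MF : Type
  | atom : Nat → MF
  | zero : MF
  | one : MF
  | bot : MF
  | top : MF
  | neg : MF → MF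
  | tensor : MF → MF → MF
  | par : MF → MF → MF
  | conj : MF → MF → MF
  | disj : MF → MF → MF

/-- Linear implication A ⊸ B := ¬A ⊕ B. -/
def MF.imp (A B : MF) : MF := MF.par (MF.neg A) B

/-- Tarskian possibility ◇A := ¬A ⊸ A. -/
def MF.diam (A : MF) : MF := MF.imp (MF.neg A) A

/-- Tarskian necessity □A := ¬◇¬A. -/
def MF.box (A : MF) : MF := MF.neg (MF.diam (MF.neg A))

/-- `Deriv W M C Γ Δ` : the sequent Γ ⇒ Δ (Γ, Δ finite multisets) is derivable
in GMALL extended by weakening (if `W`), mingle (if `M`), contraction (if `C`). -/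
inductive Deriv (W M C : Prop) : Multiset MF → Multiset MF → Prop
  | id (A : MF) : Deriv W M C {A} {A}
  | l0 : Deriv W M C {MF.zero} 0
  | r0 {Γ Δ} : Deriv W M C Γ Δ → Deriv W M C Γ (MF.zero ::ₘ Δ)
  | l1 {Γ Δ} : Deriv W M C Γ Δ → Deriv W M C (MF.one ::ₘ Γ) Δ
  | r1 : Deriv W M C 0 {MF.one}
  | lbot {Γ Δ} : Deriv W M C (MF.bot ::ₘ Γ) Δ
  | rtop {Γ Δ} : Deriv W M C Γ (MF.top ::ₘ Δ)
  | ltensor {A B Γ Δ} : Deriv W M C (A ::ₘ B ::ₘ Γ) Δ →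
      Deriv W M C (MF.tensor A B ::ₘ Γ) Δ
  | rtensor {A B Γ Γ' Δ Δ'} : Deriv W M C Γ (A ::ₘ Δ) → Deriv W M C Γ' (B ::ₘ Δ') →
      Deriv W M C (Γ + Γ') (MF.tensor A B ::ₘ (Δ + Δ'))
  | lpar {A B Γ Γ' Δ Δ'} : Deriv W M C (A ::ₘ Γ) Δ → Deriv W M C (B ::ₘ Γ') Δ' →
      Deriv W M C (MF.par A B ::ₘ (Γ + Γ')) (Δ + Δ')
  | rpar {A B Γ Δ} : Deriv W M C Γ (A ::ₘ B ::ₘ Δ) →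
      Deriv W M C Γ (MF.par A B ::ₘ Δ)
  | lconj1 {A B Γ Δ} : Deriv W M C (A ::ₘ Γ) Δ → Deriv W M C (MF.conj A B ::ₘ Γ) Δ
  | lconj2 {A B Γ Δ} : Deriv W M C (B ::ₘ Γ) Δ → Deriv W M C (MF.conj A B ::ₘ Γ) Δ
  | rconj {A B Γ Δ} : Deriv W M C Γ (A ::ₘ Δ) → Deriv W M C Γ (B ::ₘ Δ) →
      Deriv W M C Γ (MF.conj A B ::ₘ Δ)
  | ldisj {A B Γ Δ} : Deriv W M C (A ::ₘ Γ) Δ → Deriv W M C (B ::ₘ Γ) Δ →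
      Deriv W M C (MF.disj A B ::ₘ Γ) Δ
  | rdisj1 {A B Γ Δ} : Deriv W M C Γ (A ::ₘ Δ) → Deriv W M C Γ (MF.disj A B ::ₘ Δ)
  | rdisj2 {A B Γ Δ} : Deriv W M C Γ (B ::ₘ Δ) → Deriv W M C Γ (MF.disj A B ::ₘ Δ)
  | lneg {A Γ Δ} : Deriv W M C Γ (A ::ₘ Δ) → Deriv W M C (MF.neg A ::ₘ Γ) Δ
  | rneg {A Γ Δ} : Deriv W M C (A ::ₘ Γ) Δ → Deriv W M C Γ (MF.neg A ::ₘ Δ)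
  | limp {A B Γ Γ' Δ Δ'} : Deriv W M C Γ (A ::ₘ Δ) → Deriv W M C (B ::ₘ Γ') Δ' →
      Deriv W M C (MF.imp A B ::ₘ (Γ + Γ')) (Δ + Δ')
  | rimp {A B Γ Δ} : Deriv W M C (A ::ₘ Γ) (B ::ₘ Δ) →
      Deriv W M C Γ (MF.imp A B ::ₘ Δ)
  | lw {A Γ Δ} : W → Deriv W M C Γ Δ → Deriv W M C (A ::ₘ Γ) Δ
  | rw {A Γ Δ} : W → Deriv W M C Γ Δ → Deriv W M C Γ (A ::ₘ Δ)
  | mingle {Γ Γ' Δ Δ'} : M → Deriv W M C Γ Δ → Deriv W M C Γ' Δ' →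
      Deriv W M C (Γ + Γ') (Δ + Δ')
  | lc {A Γ Δ} : C → Deriv W M C (A ::ₘ A ::ₘ Γ) Δ → Deriv W M C (A ::ₘ Γ) Δ
  | rc {A Γ Δ} : C → Deriv W M C Γ (A ::ₘ A ::ₘ Δ) → Deriv W M C Γ (A ::ₘ Δ)

/-- GMALL : no extra structural rules. -/
def GMALL : Multiset MF → Multiset MF → Prop := Deriv False False False

/-- GMALL + the mingle rule M. -/
def GMALLM : Multiset MF → Multiset MF → Prop := Deriv False True False

/-- GAMALL : GMALL + weakening. -/
def GAMALL : Multiset MF → Multiset MF → Prop := Deriv True False False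

/-- GSLL : GMALL + contraction. -/
def GSLL : Multiset MF → Multiset MF → Prop := Deriv False False True


/-!
`◇X = ¬¬X ⊕ X` acts as a doubled `X`: `Γ ⇒ X, X, Δ` gives `Γ ⇒ ◇X, Δ`, on the left `◇X` splits
the context between two copies of `X`, and dually `□X` is introduced on the right from two
refutations of `¬X`. With weakening also `□X ⇒ X` and `X ⇒ ◇X`. So `⇒ ◇(F ⊸ G)` reduces to
`F, F ⇒ G, G`. Instantiating `X, X ⇒ □X` at `□A`, `◇A` and `A` gives the first, second and fifth
formula; `¬◇A, A ⇒` gives `A, A ⇒ □◇A`; `◇A ⇒ A, A` gives `◇A ⊸ A`; and splitting `◇(A ⊸ □B)`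
into two copies of `A ⊸ □B`, each of which yields `□A ⇒ B`, gives the last one.
-/

namespace Deriv

variable {W M C : Prop}

theorem of_eq {Γ Γ' Δ Δ' : Multiset MF} (h : Deriv W M C Γ Δ) (hΓ : Γ = Γ') (hΔ : Δ = Δ') :
    Deriv W M C Γ' Δ' :=
  hΓ ▸ hΔ ▸ h

theorem rdiam {X : MF} {Γ Δ : Multiset MF} (h : Deriv W M C Γ (X ::ₘ X ::ₘ Δ)) :
    Deriv W M C Γ (X.diam ::ₘ Δ) :=
  rimp (lneg h)

theorem ldiam {X : MF} {Γ Γ' Δ Δ' : Multiset MF} (h : Deriv W M C (X ::ₘ Γ) Δ)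
    (h' : Deriv W M C (X ::ₘ Γ') Δ') : Deriv W M C (X.diam ::ₘ (Γ + Γ')) (Δ + Δ') :=
  lpar (lneg (rneg h)) h'

theorem rbox {X : MF} {Γ Γ' Δ Δ' : Multiset MF} (h : Deriv W M C (X.neg ::ₘ Γ) Δ)
    (h' : Deriv W M C (X.neg ::ₘ Γ') Δ') : Deriv W M C (Γ + Γ') (X.box ::ₘ (Δ + Δ')) :=
  rneg (ldiam h h')

theorem rdiam_imp {F G : MF} {Γ Δ : Multiset MF}
    (h : Deriv W M C (F ::ₘ F ::ₘ Γ) (G ::ₘ G ::ₘ Δ)) :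
    Deriv W M C Γ ((MF.imp F G).diam ::ₘ Δ) :=
  rdiam (rimp ((rimp h).of_eq rfl (Multiset.cons_swap _ _ _)))

theorem pair_entails_box (X : MF) : Deriv W M C {X, X} {X.box} := by
  simpa using rbox (lneg (id X)) (lneg (id X))

theorem rdiam_of_weak {X : MF} {Γ Δ : Multiset MF} (hW : W) (h : Deriv W M C Γ (X ::ₘ Δ)) :
    Deriv W M C Γ (X.diam ::ₘ Δ) :=
  rdiam (rw hW h)

theorem lbox {X : MF} {Γ Δ : Multiset MF} (hW : W) (h : Deriv W M C (X ::ₘ Γ) Δ) :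
    Deriv W M C (X.box ::ₘ Γ) Δ :=
  lneg (rdiam (rw hW (rneg h)))

end Deriv

open Deriv

theorem gamall_diam_imp_box (X : MF) : GAMALL 0 {(MF.imp X X.box).diam} :=
  rdiam_imp (rw trivial (pair_entails_box X))

theorem gamall_diam_imp_box_diam (A : MF) : GAMALL 0 {(MF.imp A A.diam.box).diam} := by
  have hA : GAMALL {A.diam.neg, A} 0 := lneg (rdiam_of_weak trivial (id A))
  exact rdiam_imp (rw trivial (by simpa using rbox hA hA))

theorem gamall_diam_diam_imp_self (A : MF) : GAMALL 0 {(MF.imp A.diam A).diam} := by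
  have h : GAMALL {A.diam} {A, A} := (ldiam (id A) (id A)).of_eq (by simp) (by simp)
  exact rdiam_imp (lw trivial h)

theorem gamall_diam_imp_box_imp_diam_box_imp (A B : MF) :
    GAMALL 0 {MF.imp (MF.imp A B.box).diam (MF.imp A.box B).diam} := by
  have hD : GAMALL {MF.imp A B.box, A.box} {B} :=
    (limp (lbox trivial (id A)) (lbox trivial (id B))).of_eq (by simp) (by simp)
  have h : GAMALL {A.box, A.box, (MF.imp A B.box).diam} {B, B} :=
    (ldiam hD hD).of_eq
      (by rw [Multiset.singleton_add, Multiset.cons_swap]; exact congrArg _ (Multiset.pair_comm ..))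
      (by simp)
  exact rimp (rdiam_imp h)

/-- ◇-forms of S4, S5 and B, and related formulas, are derivable in GAMALL. -/
theorem gamall_diamond_forms (A B : MF) :
    GAMALL 0 {(MF.imp A.box A.box.box).diam} ∧
    GAMALL 0 {(MF.imp A.diam A.diam.box).diam} ∧
    GAMALL 0 {(MF.imp A A.diam.box).diam} ∧
    GAMALL 0 {(MF.imp A.diam A).diam} ∧
    GAMALL 0 {(MF.imp A A.box).diam} ∧
    GAMALL 0 {MF.imp (MF.imp A B.box).diam (MF.imp A.box B).diam} :=
  ⟨gamall_diam_imp_box A.box, gamall_diam_imp_box A.diam, gamall_diam_imp_box_diam A,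
    gamall_diam_diam_imp_self A, gamall_diam_imp_box A, gamall_diam_imp_box_imp_diam_box_imp A B⟩
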